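/- arXiv:2407.15206 — 9 statements merged into one kernel-verified Lean document; each statement's English description precedes it below -/
import Mathlib

section
/- Let C be a vertex cover of a finite simple graph G. The following are equivalent: (a) there exists an edge {u,v} ∈ E(G) with u ∈ C, v ∉ C, and N_G(u) \ C = {v}; (b) there exists an edge {u,v} ∈ E(G) with u ∈ C, v ∉ C, and (C \ {u}) ∪ {v} is a vertex cover of G; (c) there exist an edge {u,v} ∈ E(G) and a vertex cover C₁ of G such that the symmetric difference C △ C₁ equals {u,v}. -/
/-- `C` is a vertex cover of `G`: every edge of `G` meets `C`. -/
def IsVC {V : Type*} (G : SimpleGraph V) (C : Finset V) : Prop :=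
  ∀ ⦃u v : V⦄, G.Adj u v → u ∈ C ∨ v ∈ C

lemma IsVC.mono {V : Type*} {G : SimpleGraph V} {C₁ C₂ : Finset V}
    (h : C₁ ⊆ C₂) (hC : IsVC G C₁) : IsVC G C₂ := fun _ _ hadj =>
  (hC hadj).imp (fun hx => h hx) (fun hx => h hx)

theorem exchange_property_equivalences
    {V : Type*} [Fintype V] [DecidableEq V] (G : SimpleGraph V) [DecidableRel G.Adj]
    (C : Finset V) (hC : IsVC G C) :
    ((∃ u v : V, G.Adj u v ∧ u ∈ C ∧ v ∉ C ∧ G.neighborFinset u \ C = {v}) ↔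
      (∃ u v : V, G.Adj u v ∧ u ∈ C ∧ v ∉ C ∧ IsVC G (insert v (C.erase u)))) ∧
    ((∃ u v : V, G.Adj u v ∧ u ∈ C ∧ v ∉ C ∧ IsVC G (insert v (C.erase u))) ↔
      (∃ u v : V, G.Adj u v ∧ ∃ C₁ : Finset V, IsVC G C₁ ∧
        (C \ C₁) ∪ (C₁ \ C) = {u, v})) := by
  constructor
  · constructor
    · rintro ⟨u, v, hadj, huC, hvC, hN⟩
      refine ⟨u, v, hadj, huC, hvC, fun x y hxy => ?_⟩
      by_contra hcon
      push_neg at hcon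
      obtain ⟨hx, hy⟩ := hcon
      simp only [Finset.mem_insert, Finset.mem_erase, not_or, not_and_or, not_not] at hx hy
      obtain ⟨hxv, hxu⟩ := hx
      obtain ⟨hyv, hyu⟩ := hy
      rcases hC hxy with hxC | hyC
      · have hxEq : x = u := hxu.resolve_right (fun h => h hxC)
        subst hxEq
        have hyNC : y ∉ C := by
          rcases hyu with h | h
          · exact absurd h.symm hxy.ne
          · exact h
        have : y ∈ G.neighborFinset x \ C := by
          simp [SimpleGraph.mem_neighborFinset, hxy, hyNC]
        rw [hN, Finset.mem_singleton] at this
        exact hyv this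
      · have hyEq : y = u := hyu.resolve_right (fun h => h hyC)
        subst hyEq
        have hxNC : x ∉ C := by
          rcases hxu with h | h
          · exact absurd h hxy.ne
          · exact h
        have : x ∈ G.neighborFinset y \ C := by
          simp [SimpleGraph.mem_neighborFinset, hxy.symm, hxNC]
        rw [hN, Finset.mem_singleton] at this
        exact hxv this
    · rintro ⟨u, v, hadj, huC, hvC, hVC⟩
      refine ⟨u, v, hadj, huC, hvC, ?_⟩
      apply Finset.Subset.antisymm
      · intro w hw
        rw [Finset.mem_sdiff, SimpleGraph.mem_neighborFinset] at hw
        obtain ⟨huw, hwC⟩ := hw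
        rcases hVC huw with h | h
        · exfalso
          rcases Finset.mem_insert.mp h with h | h
          · subst h; exact hvC huC
          · exact (Finset.mem_erase.mp h).1 rfl
        · rcases Finset.mem_insert.mp h with h | h
          · simp [h]
          · exact absurd (Finset.mem_erase.mp h).2 hwC
      · intro w hw
        rw [Finset.mem_singleton] at hw; subst hw
        simp [SimpleGraph.mem_neighborFinset, hadj, hvC]
  · constructor
    · rintro ⟨u, v, hadj, huC, hvC, hVC⟩
      refine ⟨u, v, hadj, insert v (C.erase u), hVC, ?_⟩
      have huv : u ≠ v := hadj.ne
      ext w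
      simp only [Finset.mem_union, Finset.mem_sdiff, Finset.mem_insert, Finset.mem_erase,
        Finset.mem_singleton]
      constructor
      · rintro (⟨hwC, hw⟩ | ⟨hw, hwC⟩)
        · push_neg at hw
          left
          by_contra hne
          exact hw.2 hne hwC
        · rcases hw with rfl | ⟨_, hw⟩
          · right; rfl
          · exact absurd hw hwC
      · rintro (rfl | rfl)
        · left
          refine ⟨huC, ?_⟩
          push_neg
          exact ⟨huv, fun h => absurd rfl h⟩
        · right; exact ⟨Or.inl rfl, hvC⟩
    · rintro ⟨u, v, hadj, C₁, hC₁, hsd⟩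
      have huv : u ≠ v := hadj.ne
      have hu : u ∈ (C \ C₁) ∪ (C₁ \ C) := by rw [hsd]; simp
      have hv : v ∈ (C \ C₁) ∪ (C₁ \ C) := by rw [hsd]; simp
      simp only [Finset.mem_union, Finset.mem_sdiff] at hu hv
      have key : ∀ w, w ∈ (C \ C₁) ∪ (C₁ \ C) → w = u ∨ w = v := by
        intro w hw; rw [hsd] at hw; simpa using hw
      rcases hu with ⟨huC, huC₁⟩ | ⟨huC₁, huC⟩ <;> rcases hv with ⟨hvC, hvC₁⟩ | ⟨hvC₁, hvC⟩
      · exact absurd (hC₁ hadj) (by simp [huC₁, hvC₁])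
      · refine ⟨u, v, hadj, huC, hvC, ?_⟩
        refine IsVC.mono (C₁ := C₁) ?_ hC₁
        intro x hx
        simp only [Finset.mem_insert, Finset.mem_erase]
        by_cases hxC : x ∈ C
        · right
          exact ⟨fun h => huC₁ (h ▸ hx), hxC⟩
        · have := key x (by simp [Finset.mem_union, Finset.mem_sdiff, hx, hxC])
          rcases this with rfl | rfl
          · exact absurd hx huC₁
          · left; rfl
      · refine ⟨v, u, hadj.symm, hvC, huC, ?_⟩
        refine IsVC.mono (C₁ := C₁) ?_ hC₁
        intro x hx
        simp only [Finset.mem_insert, Finset.mem_erase]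
        by_cases hxC : x ∈ C
        · right
          exact ⟨fun h => hvC₁ (h ▸ hx), hxC⟩
        · have := key x (by simp [Finset.mem_union, Finset.mem_sdiff, hx, hxC])
          rcases this with rfl | rfl
          · left; rfl
          · exact absurd hx hvC₁
      · exact absurd (hC hadj) (by simp [huC, hvC])
end

section
/- Let G be a finite simple graph and let {u,v} ∈ E(G) be an edge such that N_G(u) ⊆ N_G[v]. Then there exists a minimal vertex cover C of G such that N_G(u) \ C = {v}. -/
/-- `C` is a minimal vertex cover of `G`. -/
def IsMinVC {V : Type*} (G : SimpleGraph V) (C : Finset V) : Prop :=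
  IsVC G C ∧ ∀ D ⊆ C, IsVC G D → D = C

theorem exists_minVC_neighbor_diff_singleton
    {V : Type*} [Fintype V] [DecidableEq V] (G : SimpleGraph V) [DecidableRel G.Adj]
    (u v : V) (huv : G.Adj u v)
    (h : G.neighborFinset u ⊆ insert v (G.neighborFinset v)) :
    ∃ C : Finset V, IsMinVC G C ∧ G.neighborFinset u \ C = {v} := by
  classical
  -- The set of vertex covers avoiding v, as a finset of finsets
  set S : Finset (Finset V) :=
    Finset.univ.filter (fun C => v ∉ C ∧ IsVC G C) with hS
  have hne : S.Nonempty := by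
    refine ⟨Finset.univ.erase v, ?_⟩
    simp only [hS, Finset.mem_filter, Finset.mem_univ, true_and]
    constructor
    · simp
    · intro a b hab
      rcases eq_or_ne a v with rfl | ha
      · right; simp [Finset.mem_erase, hab.ne']
      · left; simp [Finset.mem_erase, ha]
  obtain ⟨C, hCS, hmin⟩ := S.exists_min_image Finset.card hne
  simp only [hS, Finset.mem_filter, Finset.mem_univ, true_and] at hCS
  obtain ⟨hvC, hCvc⟩ := hCS
  refine ⟨C, ⟨hCvc, ?_⟩, ?_⟩
  · intro D hDC hDvc
    have hvD : v ∉ D := fun hv => hvC (hDC hv)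
    have hDS : D ∈ S := by
      simp only [hS, Finset.mem_filter, Finset.mem_univ, true_and]
      exact ⟨hvD, hDvc⟩
    have := hmin D hDS
    exact Finset.eq_of_subset_of_card_le hDC this
  · ext w
    simp only [Finset.mem_sdiff, SimpleGraph.mem_neighborFinset, Finset.mem_singleton]
    constructor
    · rintro ⟨hw, hwC⟩
      by_contra hwv
      have hwN : w ∈ insert v (G.neighborFinset v) := h (by simpa using hw)
      rw [Finset.mem_insert] at hwN
      rcases hwN with rfl | hwN
      · exact hwv rfl
      · have : G.Adj v w := by simpa using hwN
        rcases hCvc this with hv | hw'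
        · exact hvC hv
        · exact hwC hw'
    · rintro rfl
      exact ⟨huv, hvC⟩
end

section
/- Let G be an unmixed finite simple graph and let C_i, C_j be distinct minimal vertex covers of G. Then |C_i ∩ C_j| = |C_i| - 1 if and only if there exists an edge {u,v} ∈ E(G) such that u ∈ C_i, v ∉ C_i, and (C_i \ {u}) ∪ {v} = C_j. -/
theorem edge_of_cover_graph_iff_exchange
    {V : Type*} [Fintype V] [DecidableEq V] (G : SimpleGraph V)
    (hunmixed : ∀ C D : Finset V, IsMinVC G C → IsMinVC G D → C.card = D.card)
    (Ci Cj : Finset V) (hCi : IsMinVC G Ci) (hCj : IsMinVC G Cj) (hne : Ci ≠ Cj) :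
    (Ci ∩ Cj).card = Ci.card - 1 ↔
      ∃ u v : V, G.Adj u v ∧ u ∈ Ci ∧ v ∉ Ci ∧ insert v (Ci.erase u) = Cj := by
  have hcard : Ci.card = Cj.card := hunmixed Ci Cj hCi hCj
  constructor
  · intro h
    -- Ci is nonempty
    have hCine : Ci.Nonempty := by
      rcases Ci.eq_empty_or_nonempty with he | hn
      · exfalso
        apply hne
        have hvc : IsVC G (∅ : Finset V) := he ▸ hCi.1
        have h1 : (∅ : Finset V) = Cj := hCj.2 ∅ (Finset.empty_subset _) hvc
        rw [he, ← h1]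
      · exact hn
    have hpos : 1 ≤ Ci.card := Finset.card_pos.mpr hCine
    have e1 := Finset.card_inter_add_card_sdiff Ci Cj
    have e2 := Finset.card_inter_add_card_sdiff Cj Ci
    rw [Finset.inter_comm] at e2
    have h1 : (Ci \ Cj).card = 1 := by omega
    have h2 : (Cj \ Ci).card = 1 := by omega
    obtain ⟨u, hu⟩ := Finset.card_eq_one.mp h1
    obtain ⟨v, hv⟩ := Finset.card_eq_one.mp h2
    have huCi : u ∈ Ci ∧ u ∉ Cj := by
      have : u ∈ Ci \ Cj := hu ▸ Finset.mem_singleton_self u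
      exact ⟨(Finset.mem_sdiff.mp this).1, (Finset.mem_sdiff.mp this).2⟩
    have hvCj : v ∈ Cj ∧ v ∉ Ci := by
      have : v ∈ Cj \ Ci := hv ▸ Finset.mem_singleton_self v
      exact ⟨(Finset.mem_sdiff.mp this).1, (Finset.mem_sdiff.mp this).2⟩
    -- minimality: erase u Ci is not a cover
    have hnotvc : ¬ IsVC G (Ci.erase u) := by
      intro hvc
      have heq := hCi.2 _ (Finset.erase_subset _ _) hvc
      have : u ∈ Ci.erase u := by rw [heq]; exact huCi.1
      exact (Finset.notMem_erase u Ci) this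
    rw [IsVC] at hnotvc
    push_neg at hnotvc
    obtain ⟨a, b, hab, ha, hb⟩ := hnotvc
    -- one of a, b is u; wlog obtain edge u-w with w ∉ Ci
    have key : ∃ w, G.Adj u w ∧ w ∉ Ci := by
      rcases hCi.1 hab with haCi | hbCi
      · have hau : a = u := by
          by_contra hau
          exact ha (Finset.mem_erase.mpr ⟨hau, haCi⟩)
        subst hau
        refine ⟨b, hab, fun hbCi => ?_⟩
        exact hb (Finset.mem_erase.mpr ⟨fun e => hab.ne e.symm, hbCi⟩)
      · have hbu : b = u := by
          by_contra hbu
          exact hb (Finset.mem_erase.mpr ⟨hbu, hbCi⟩)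
        subst hbu
        refine ⟨a, hab.symm, fun haCi => ?_⟩
        exact ha (Finset.mem_erase.mpr ⟨fun e => hab.symm.ne e.symm, haCi⟩)
    obtain ⟨w, huw, hwCi⟩ := key
    have hwCj : w ∈ Cj := by
      rcases hCj.1 huw with h' | h'
      · exact absurd h' huCi.2
      · exact h'
    have hwv : w = v := by
      have : w ∈ Cj \ Ci := Finset.mem_sdiff.mpr ⟨hwCj, hwCi⟩
      rw [hv] at this
      exact Finset.mem_singleton.mp this
    rw [hwv] at huw
    refine ⟨u, v, huw, huCi.1, hvCj.2, ?_⟩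
    ext x
    simp only [Finset.mem_insert, Finset.mem_erase]
    constructor
    · rintro (rfl | ⟨hxu, hxCi⟩)
      · exact hvCj.1
      · by_contra hxCj
        have : x ∈ Ci \ Cj := Finset.mem_sdiff.mpr ⟨hxCi, hxCj⟩
        rw [hu] at this
        exact hxu (Finset.mem_singleton.mp this)
    · intro hxCj
      by_cases hxCi : x ∈ Ci
      · right
        refine ⟨fun e => huCi.2 (e ▸ hxCj), hxCi⟩
      · left
        have : x ∈ Cj \ Ci := Finset.mem_sdiff.mpr ⟨hxCj, hxCi⟩
        rw [hv] at this
        exact Finset.mem_singleton.mp this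
  · rintro ⟨u, v, huv, huCi, hvCi, hCjeq⟩
    have hinter : Ci ∩ Cj = Ci.erase u := by
      ext x
      simp only [Finset.mem_inter, ← hCjeq, Finset.mem_insert, Finset.mem_erase]
      constructor
      · rintro ⟨hxCi, rfl | ⟨hxu, _⟩⟩
        · exact absurd hxCi hvCi
        · exact ⟨hxu, hxCi⟩
      · rintro ⟨hxu, hxCi⟩
        exact ⟨hxCi, Or.inr ⟨hxu, hxCi⟩⟩
    rw [hinter, Finset.card_erase_of_mem huCi]
end

section
/- An edge e of a finite simple graph G has the (P) property if and only if |e ∩ C| = 1 for every minimal vertex cover C of G. -/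
/-- The edge `{a, b}` has the (P) property: for all edges `{a, a'}` and `{b, b'}`
distinct from `{a, b}`, the pair `{a', b'}` is an edge of `G`. -/
def HasP {V : Type*} (G : SimpleGraph V) (a b : V) : Prop :=
  ∀ a' b' : V, G.Adj a a' → G.Adj b b' → a' ≠ b → b' ≠ a → G.Adj a' b'

/-- Every vertex cover contains a minimal vertex cover. -/
lemma exists_minVC_subset {V : Type*} [DecidableEq V] (G : SimpleGraph V)
    (D : Finset V) (hD : IsVC G D) : ∃ C ⊆ D, IsMinVC G C := by
  classical
  obtain ⟨m, hm, hmin⟩ : ∃ m ∈ D.powerset.filter (fun C => IsVC G C),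
      ∀ x ∈ D.powerset.filter (fun C => IsVC G C), ¬ x < m := by
    obtain ⟨m, hm⟩ := Finset.exists_minimal (s := D.powerset.filter fun C => IsVC G C)
      ⟨D, by simp [hD]⟩
    exact ⟨m, hm.1, fun x hx hlt => hlt.not_ge (hm.2 hx hlt.le)⟩
  simp only [Finset.mem_filter, Finset.mem_powerset] at hm
  refine ⟨m, hm.1, hm.2, ?_⟩
  intro E hE hEvc
  by_contra hne
  exact hmin E (by simp [Finset.mem_filter, Finset.mem_powerset, hE.trans hm.1, hEvc])
    (lt_of_le_of_ne hE hne)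

/-- In a minimal vertex cover, every vertex has a neighbor outside the cover. -/
lemma exists_uncovered {V : Type*} [DecidableEq V] (G : SimpleGraph V)
    {C : Finset V} (hC : IsMinVC G C) {x : V} (hx : x ∈ C) :
    ∃ x', G.Adj x x' ∧ x' ∉ C := by
  classical
  have h1 : ¬ IsVC G (C.erase x) := by
    intro h
    have heq := hC.2 (C.erase x) (Finset.erase_subset _ _) h
    exact Finset.notMem_erase x C (by rw [heq]; exact hx)
  simp only [IsVC, not_forall] at h1
  obtain ⟨u, v, huv, hnot⟩ := h1
  push_neg at hnot
  obtain ⟨hu, hv⟩ := hnot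
  rcases hC.1 huv with huC | hvC
  · have hu' : u = x := by
      by_contra h
      exact hu (Finset.mem_erase.mpr ⟨h, huC⟩)
    refine ⟨v, hu' ▸ huv, ?_⟩
    intro hvC
    have : v ≠ x := hu' ▸ huv.ne'
    exact hv (Finset.mem_erase.mpr ⟨this, hvC⟩)
  · have hv' : v = x := by
      by_contra h
      exact hv (Finset.mem_erase.mpr ⟨h, hvC⟩)
    refine ⟨u, (hv' ▸ huv).symm, ?_⟩
    intro huC
    have : u ≠ x := hv' ▸ huv.ne
    exact hu (Finset.mem_erase.mpr ⟨this, huC⟩)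

theorem hasP_iff_inter_minVC_card_one
    {V : Type*} [Fintype V] [DecidableEq V] (G : SimpleGraph V)
    (a b : V) (hab : G.Adj a b) :
    HasP G a b ↔ ∀ C : Finset V, IsMinVC G C → (({a, b} : Finset V) ∩ C).card = 1 := by
  classical
  have hne : a ≠ b := hab.ne
  constructor
  · intro hP C hC
    have hor : a ∈ C ∨ b ∈ C := hC.1 hab
    have hnot : ¬ (a ∈ C ∧ b ∈ C) := by
      rintro ⟨ha, hb⟩
      obtain ⟨a', haa', ha'⟩ := exists_uncovered G hC ha
      obtain ⟨b', hbb', hb'⟩ := exists_uncovered G hC hb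
      have h1 : a' ≠ b := fun h => ha' (h ▸ hb)
      have h2 : b' ≠ a := fun h => hb' (h ▸ ha)
      have hadj := hP a' b' haa' hbb' h1 h2
      rcases hC.1 hadj with h | h
      · exact ha' h
      · exact hb' h
    have : ({a, b} : Finset V) ∩ C = {a} ∨ ({a, b} : Finset V) ∩ C = {b} := by
      rcases hor with ha | hb
      · left
        ext x
        simp only [Finset.mem_inter, Finset.mem_insert, Finset.mem_singleton]
        constructor
        · rintro ⟨h1 | h1, h2⟩
          · exact h1
          · exact absurd ⟨ha, h1 ▸ h2⟩ hnot
        · rintro rfl; exact ⟨Or.inl rfl, ha⟩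
      · right
        ext x
        simp only [Finset.mem_inter, Finset.mem_insert, Finset.mem_singleton]
        constructor
        · rintro ⟨h1 | h1, h2⟩
          · exact absurd ⟨h1 ▸ h2, hb⟩ hnot
          · exact h1
        · rintro rfl; exact ⟨Or.inr rfl, hb⟩
    rcases this with h | h <;> simp [h]
  · intro h a' b' haa' hbb' ha'b hb'a
    by_contra hadj
    set D : Finset V := Finset.univ \ {a', b'} with hD
    have hDvc : IsVC G D := by
      intro u v huv
      by_contra hcon
      push_neg at hcon
      obtain ⟨hu, hv⟩ := hcon
      simp only [hD, Finset.mem_sdiff, Finset.mem_univ, true_and, not_not,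
        Finset.mem_insert, Finset.mem_singleton] at hu hv
      rcases hu with rfl | rfl <;> rcases hv with rfl | rfl
      · exact huv.ne rfl
      · exact hadj huv
      · exact hadj huv.symm
      · exact huv.ne rfl
    obtain ⟨C, hCD, hC⟩ := exists_minVC_subset G D hDvc
    have ha'C : a' ∉ C := fun hx => by
      have := hCD hx
      simp [hD] at this
    have hb'C : b' ∉ C := fun hx => by
      have := hCD hx
      simp [hD] at this
    have haC : a ∈ C := (hC.1 haa').resolve_right ha'C
    have hbC : b ∈ C := (hC.1 hbb').resolve_right hb'C
    have hcard := h C hC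
    have : ({a, b} : Finset V) ∩ C = {a, b} := by
      ext x
      simp only [Finset.mem_inter, Finset.mem_insert, Finset.mem_singleton]
      constructor
      · exact fun h => h.1
      · rintro (rfl | rfl)
        · exact ⟨Or.inl rfl, haC⟩
        · exact ⟨Or.inr rfl, hbC⟩
    rw [this, Finset.card_insert_of_notMem (by simp [hne]), Finset.card_singleton] at hcard
    omega
end

section
/- If C⁴ = (t₁,t₂,t₃,t₄,t₁) is a 4-cycle of a finite simple graph G and each edge of C⁴ has the (P) property, then N_G(t₁) = N_G(t₃), N_G(t₂) = N_G(t₄), and C⁴ is an induced cycle (i.e., {t₁,t₃} ∉ E(G) and {t₂,t₄} ∉ E(G)). -/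
theorem fourCycle_allP_duplicated_and_induced
    {V : Type*} [Fintype V] [DecidableEq V] (G : SimpleGraph V)
    (t₁ t₂ t₃ t₄ : V)
    (h12 : G.Adj t₁ t₂) (h23 : G.Adj t₂ t₃) (h34 : G.Adj t₃ t₄) (h41 : G.Adj t₄ t₁)
    (d12 : t₁ ≠ t₂) (d13 : t₁ ≠ t₃) (d14 : t₁ ≠ t₄)
    (d23 : t₂ ≠ t₃) (d24 : t₂ ≠ t₄) (d34 : t₃ ≠ t₄)
    (p12 : HasP G t₁ t₂) (p23 : HasP G t₂ t₃) (p34 : HasP G t₃ t₄) (p41 : HasP G t₄ t₁) :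
    G.neighborSet t₁ = G.neighborSet t₃ ∧ G.neighborSet t₂ = G.neighborSet t₄ ∧
      ¬ G.Adj t₁ t₃ ∧ ¬ G.Adj t₂ t₄ := by
  refine ⟨?_, ?_, ?_, ?_⟩
  · ext v
    simp only [SimpleGraph.mem_neighborSet]
    constructor
    · intro hv
      by_cases hv2 : v = t₂
      · exact hv2 ▸ h23.symm
      · exact (p12 v t₃ hv h23 hv2 d13.symm).symm
    · intro hv
      by_cases hv4 : v = t₄
      · exact hv4 ▸ h41.symm
      · exact (p34 v t₁ hv h41 hv4 d13).symm
  · ext v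
    simp only [SimpleGraph.mem_neighborSet]
    constructor
    · intro hv
      by_cases hv3 : v = t₃
      · exact hv3 ▸ h34.symm
      · exact (p23 v t₄ hv h34 hv3 d24.symm).symm
    · intro hv
      by_cases hv1 : v = t₁
      · exact hv1 ▸ h12.symm
      · exact (p41 v t₂ hv h12 hv1 d24).symm
  · intro h13
    exact G.irrefl (p12 t₃ t₃ h13 h23 d23.symm d13.symm)
  · intro h24
    exact G.irrefl (p23 t₄ t₄ h24 h34 d34.symm d24.symm)
end

section
/- If P is a perfect matching of a finite simple graph G such that every edge of P has the (P) property, then every minimal vertex cover of G has exactly |P| vertices; in particular G is unmixed and α₀(G) = |P|, so P is a perfect matching of König type. -/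
/-- A minimal vertex cover cannot contain both endpoints of an edge with property (P). -/
lemma key_not_both {V : Type*} [DecidableEq V] (G : SimpleGraph V)
    (C : Finset V) (hmin : IsMinVC G C) {a b : V} (hab : G.Adj a b)
    (hP : HasP G a b) (ha : a ∈ C) (hb : b ∈ C) : False := by
  classical
  obtain ⟨hC, hm⟩ := hmin
  by_cases h1 : ∀ a', G.Adj a a' → a' ≠ b → a' ∈ C
  · have hcov : IsVC G (C.erase a) := by
      intro u v huv
      rcases hC huv with hu | hv
      · by_cases hua : u = a
        · subst hua
          by_cases hvb : v = b
          · subst hvb; right; exact Finset.mem_erase.2 ⟨hab.ne', hb⟩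
          · right; exact Finset.mem_erase.2 ⟨huv.ne', h1 v huv hvb⟩
        · left; exact Finset.mem_erase.2 ⟨hua, hu⟩
      · by_cases hva : v = a
        · subst hva
          by_cases hub : u = b
          · subst hub; left; exact Finset.mem_erase.2 ⟨hab.ne', hb⟩
          · left; exact Finset.mem_erase.2 ⟨huv.ne, h1 u huv.symm hub⟩
        · right; exact Finset.mem_erase.2 ⟨hva, hv⟩
    have heq := hm _ (Finset.erase_subset _ _) hcov
    rw [← heq] at ha
    exact (Finset.notMem_erase a C) ha
  · push_neg at h1
    obtain ⟨a', haa', ha'b, ha'C⟩ := h1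
    by_cases h2 : ∀ b', G.Adj b b' → b' ≠ a → b' ∈ C
    · have hcov : IsVC G (C.erase b) := by
        intro u v huv
        rcases hC huv with hu | hv
        · by_cases hub : u = b
          · subst hub
            by_cases hva : v = a
            · subst hva; right; exact Finset.mem_erase.2 ⟨hab.ne, ha⟩
            · right; exact Finset.mem_erase.2 ⟨huv.ne', h2 v huv hva⟩
          · left; exact Finset.mem_erase.2 ⟨hub, hu⟩
        · by_cases hvb : v = b
          · subst hvb
            by_cases hua : u = a
            · subst hua; left; exact Finset.mem_erase.2 ⟨hab.ne, ha⟩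
            · left; exact Finset.mem_erase.2 ⟨huv.ne, h2 u huv.symm hua⟩
          · right; exact Finset.mem_erase.2 ⟨hvb, hv⟩
      have heq := hm _ (Finset.erase_subset _ _) hcov
      rw [← heq] at hb
      exact (Finset.notMem_erase b C) hb
    · push_neg at h2
      obtain ⟨b', hbb', hb'a, hb'C⟩ := h2
      have hadj := hP a' b' haa' hbb' ha'b hb'a
      rcases hC hadj with h | h
      · exact ha'C h
      · exact hb'C h

theorem perfectMatching_P_property_unmixed_Konig
    {V : Type*} [Fintype V] [DecidableEq V] (G : SimpleGraph V)
    (P : Finset (Sym2 V))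
    (hedges : ∀ e ∈ P, e ∈ G.edgeSet)
    (hdisj : ∀ e ∈ P, ∀ f ∈ P, e ≠ f → ∀ v : V, v ∈ e → v ∉ f)
    (hcover : ∀ v : V, ∃ e ∈ P, v ∈ e)
    (hPP : ∀ e ∈ P, ∀ a b : V, e = s(a, b) → HasP G a b) :
    (∀ C : Finset V, IsMinVC G C → C.card = P.card) ∧
      (∀ C : Finset V, IsVC G C → P.card ≤ C.card) := by
  classical
  -- lower bound: any vertex cover has at least |P| vertices
  have lower : ∀ C : Finset V, IsVC G C → P.card ≤ C.card := by
    intro C hC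
    rcases Finset.eq_empty_or_nonempty P with hP | ⟨e0, he0⟩
    · simp [hP]
    obtain ⟨⟨x0, y0⟩, hx0⟩ := Quot.exists_rep e0
    haveI : Inhabited V := ⟨x0⟩
    have hpick : ∀ e ∈ P, ∃ v, v ∈ C ∧ v ∈ e := by
      intro e he
      obtain ⟨⟨a, b⟩, rfl⟩ := Quot.exists_rep e
      have hadj : G.Adj a b := (G.mem_edgeSet).1 (hedges _ he)
      rcases hC hadj with h | h
      · exact ⟨a, h, Sym2.mem_mk_left a b⟩
      · exact ⟨b, h, Sym2.mem_mk_right a b⟩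
    set f : Sym2 V → V := fun e => if h : ∃ v, v ∈ C ∧ v ∈ e then h.choose else default with hf
    have hf1 : ∀ e ∈ P, f e ∈ C ∧ f e ∈ e := by
      intro e he
      have h := hpick e he
      simp only [hf, dif_pos h]
      exact h.choose_spec
    refine Finset.card_le_card_of_injOn f (fun e he => (hf1 e he).1) ?_
    intro e he f' hf' hef
    by_contra hne
    exact hdisj e he f' hf' hne (f e) (hf1 e he).2 (hef ▸ (hf1 f' hf').2)
  refine ⟨?_, lower⟩
  intro C hminC
  refine le_antisymm ?_ (lower C hminC.1)
  -- upper bound: map each vertex of C to its matching edge, injectively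
  set g : V → Sym2 V := fun v => (hcover v).choose with hg
  have hg1 : ∀ v, g v ∈ P ∧ v ∈ g v := fun v => by
    have h := (hcover v).choose_spec
    exact ⟨h.1, h.2⟩
  refine Finset.card_le_card_of_injOn g (fun v _ => (hg1 v).1) ?_
  intro u hu v hv huv
  by_contra hne
  obtain ⟨⟨a, b⟩, hab⟩ := Quot.exists_rep (g u)
  have hmemP : s(a, b) ∈ P := by have h := (hg1 u).1; rw [← hab] at h; exact h
  have hadjab : G.Adj a b := (G.mem_edgeSet).1 (hedges _ hmemP)
  have hue : u ∈ g u := (hg1 u).2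
  have hve : v ∈ g u := huv ▸ (hg1 v).2
  rw [← hab] at hue hve
  have hue' : u = a ∨ u = b := Sym2.mem_iff.1 hue
  have hve' : v = a ∨ v = b := Sym2.mem_iff.1 hve
  have heq : g u = s(u, v) := by
    rcases hue' with rfl | rfl <;> rcases hve' with rfl | rfl
    · exact absurd rfl hne
    · exact hab.symm
    · rw [← hab]; exact Sym2.eq_swap
    · exact absurd rfl hne
  have hadjuv : G.Adj u v := (G.mem_edgeSet).1 (heq ▸ hedges _ (hg1 u).1)
  exact key_not_both G C hminC hadjuv (hPP _ (hg1 u).1 u v heq) hu hv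
end

section
/- A finite simple graph G with at least one edge satisfies: every vertex cover of G with the exchange property has exactly |V(G)| - 1 vertices, if and only if every induced subgraph H of G with at least one edge is connected. -/
theorem exchange_covers_card_pred_iff_induced_connected
    {V : Type*} [Fintype V] [DecidableEq V] (G : SimpleGraph V)
    (hE : ∃ u v : V, G.Adj u v) :
    (∀ C : Finset V, IsVC G C →
        (∃ u v : V, G.Adj u v ∧ u ∈ C ∧ v ∉ C ∧ IsVC G (insert v (C.erase u))) →
        C.card = Fintype.card V - 1) ↔
      (∀ A : Finset V, (∃ u ∈ A, ∃ v ∈ A, G.Adj u v) →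
        (G.induce (A : Set V)).Connected) := by
  constructor
  · -- LHS → RHS, by contradiction
    intro hL A hA
    by_contra hdisc
    obtain ⟨a, haA, b, hbA, hab⟩ := hA
    have haA' : a ∈ (A : Set V) := by simpa using haA
    have hbA' : b ∈ (A : Set V) := by simpa using hbA
    have hne : Nonempty ((A : Set V)) := ⟨⟨a, haA'⟩⟩
    have hnp : ¬ (G.induce (A : Set V)).Preconnected := fun hp =>
      hdisc ((SimpleGraph.connected_iff _).mpr ⟨hp, hne⟩)
    unfold SimpleGraph.Preconnected at hnp
    push_neg at hnp
    obtain ⟨x, y, hxy⟩ := hnp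
    have key : ∃ c : (A : Set V), ¬ (G.induce (A : Set V)).Reachable ⟨a, haA'⟩ c := by
      by_cases h1 : (G.induce (A : Set V)).Reachable ⟨a, haA'⟩ x
      · exact ⟨y, fun h2 => hxy (h1.symm.trans h2)⟩
      · exact ⟨x, h1⟩
    obtain ⟨⟨c, hcA⟩, hc⟩ := key
    have hca : ¬ G.Adj c a := by
      intro h
      exact hc (SimpleGraph.Adj.reachable (by exact h.symm :
        (G.induce (A : Set V)).Adj ⟨a, haA'⟩ ⟨c, hcA⟩)).symm.symm
    have hcb : ¬ G.Adj c b := by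
      intro h
      have h1 : (G.induce (A : Set V)).Adj ⟨a, haA'⟩ ⟨b, hbA'⟩ := hab
      have h2 : (G.induce (A : Set V)).Adj ⟨b, hbA'⟩ ⟨c, hcA⟩ := h.symm
      exact hc (h1.reachable.trans h2.reachable)
    have hcane : c ≠ a := by
      intro h; subst h; exact hc (SimpleGraph.Reachable.refl _)
    have hcbne : c ≠ b := by
      intro h; subst h
      exact hc (SimpleGraph.Adj.reachable (by exact hab :
        (G.induce (A : Set V)).Adj ⟨a, haA'⟩ ⟨c, hcA⟩))
    have hac : ¬ G.Adj a c := fun h => hca h.symm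
    have hbc : ¬ G.Adj b c := fun h => hcb h.symm
    set C : Finset V := (Finset.univ.erase b).erase c with hCdef
    have hmemC : ∀ w : V, w ∈ C ↔ (w ≠ c ∧ w ≠ b) := by
      intro w; simp [hCdef, Finset.mem_erase]
    have hVC : IsVC G C := by
      intro p q hpq
      by_contra hcontra
      push_neg at hcontra
      obtain ⟨hp, hq⟩ := hcontra
      have hp' : p = c ∨ p = b := by
        by_contra h'; push_neg at h'; exact hp ((hmemC p).mpr ⟨h'.1, h'.2⟩)
      have hq' : q = c ∨ q = b := by
        by_contra h'; push_neg at h'; exact hq ((hmemC q).mpr ⟨h'.1, h'.2⟩)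
      rcases hp' with rfl | rfl <;> rcases hq' with rfl | rfl
      · exact G.ne_of_adj hpq rfl
      · exact hcb hpq
      · exact hbc hpq
      · exact G.ne_of_adj hpq rfl
    have haC : a ∈ C := (hmemC a).mpr ⟨Ne.symm hcane, G.ne_of_adj hab⟩
    have hbC : b ∉ C := fun h => ((hmemC b).mp h).2 rfl
    have hVC2 : IsVC G (insert b (C.erase a)) := by
      intro p q hpq
      by_contra hcontra
      push_neg at hcontra
      obtain ⟨hp, hq⟩ := hcontra
      have hp' : p = a ∨ p = c := by
        by_contra h'; push_neg at h'
        exact hp (Finset.mem_insert_of_mem (Finset.mem_erase.mpr ⟨h'.1,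
          (hmemC p).mpr ⟨h'.2, fun hb => hp (by rw [hb]; exact Finset.mem_insert_self b _)⟩⟩))
      have hq' : q = a ∨ q = c := by
        by_contra h'; push_neg at h'
        exact hq (Finset.mem_insert_of_mem (Finset.mem_erase.mpr ⟨h'.1,
          (hmemC q).mpr ⟨h'.2, fun hb => hq (by rw [hb]; exact Finset.mem_insert_self b _)⟩⟩))
      rcases hp' with rfl | rfl <;> rcases hq' with rfl | rfl
      · exact G.ne_of_adj hpq rfl
      · exact hac hpq
      · exact hca hpq
      · exact G.ne_of_adj hpq rfl
    have hcard := hL C hVC ⟨a, b, hab, haC, hbC, hVC2⟩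
    have hCcard : C.card = Fintype.card V - 1 - 1 := by
      rw [hCdef, Finset.card_erase_of_mem (Finset.mem_erase.mpr ⟨hcbne, Finset.mem_univ c⟩),
        Finset.card_erase_of_mem (Finset.mem_univ b), Finset.card_univ]
    have h2 : 2 ≤ Fintype.card V := Fintype.one_lt_card_iff_nontrivial.mpr ⟨⟨a, b, G.ne_of_adj hab⟩⟩
    omega
  · -- RHS → LHS
    intro h C hC hex
    obtain ⟨u, v, huv, huC, hvC, hC'⟩ := hex
    have huvne : u ≠ v := G.ne_of_adj huv
    have hCeq : C = Finset.univ.erase v := by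
      ext w
      simp only [Finset.mem_erase, Finset.mem_univ, and_true]
      constructor
      · intro hw; rintro rfl; exact hvC hw
      · intro hwv
        by_contra hwC
        set A : Finset V := insert u (Finset.univ.filter (fun x => x ∉ C)) with hAdef
        have huA : u ∈ (A : Set V) := by simp [hAdef]
        have hvA : v ∈ (A : Set V) := by simp [hAdef, hvC]
        have hwA : w ∈ (A : Set V) := by simp [hAdef, hwC]
        have hconn := h A ⟨u, by simpa using huA, v, by simpa using hvA, huv⟩
        obtain ⟨p⟩ := hconn.preconnected ⟨w, hwA⟩ ⟨u, huA⟩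
        have hwu : w ≠ u := fun hh => hwC (hh ▸ huC)
        cases p with
        | nil => exact hwu rfl
        | cons hadj p' =>
          rename_i xx
          have hGadj : G.Adj w xx.val := hadj
          have hxxA : xx.val ∈ (A : Set V) := xx.2
          have hxx : xx.val = u ∨ xx.val ∉ C := by
            simpa [hAdef] using hxxA
          have hwu' : G.Adj w u := by
            rcases hxx with h1 | h1
            · exact h1 ▸ hGadj
            · rcases hC hGadj with h2 | h2
              · exact absurd h2 hwC
              · exact absurd h2 h1
          rcases hC' hwu' with h2 | h2
          · rcases Finset.mem_insert.mp h2 with h3 | h3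
            · exact hwv h3
            · exact hwC (Finset.mem_of_mem_erase h3)
          · rcases Finset.mem_insert.mp h2 with h3 | h3
            · exact huvne h3
            · exact absurd rfl (Finset.ne_of_mem_erase h3)
    rw [hCeq, Finset.card_erase_of_mem (Finset.mem_univ v), Finset.card_univ]
end

section
/- Let G be an unmixed graph, and let C₁, C₂, C₃ be distinct minimal vertex covers forming a path in the graph G_J (i.e., |C₁ ∩ C₂| = |C₂ ∩ C₃| = α₀(G) - 1, and the path is induced, meaning |C₁ ∩ C₃| < α₀(G) - 1). Then |C₁ ∩ C₂ ∩ C₃| = α₀(G) - 2 and |C₁ ∩ C₃| = α₀(G) - 2. -/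
theorem induced_path_intersections
    {V : Type*} [Fintype V] [DecidableEq V] (G : SimpleGraph V)
    (d : ℕ) (hd : ∀ C : Finset V, IsMinVC G C → C.card = d)
    (C₁ C₂ C₃ : Finset V)
    (h1 : IsMinVC G C₁) (h2 : IsMinVC G C₂) (h3 : IsMinVC G C₃)
    (h12 : C₁ ≠ C₂) (h13 : C₁ ≠ C₃) (h23 : C₂ ≠ C₃)
    (e12 : (C₁ ∩ C₂).card = d - 1) (e23 : (C₂ ∩ C₃).card = d - 1)
    (hind : (C₁ ∩ C₃).card < d - 1) :
    (C₁ ∩ C₂ ∩ C₃).card = d - 2 ∧ (C₁ ∩ C₃).card = d - 2 := by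
  have hd2 : C₂.card = d := hd C₂ h2
  have hdge : 2 ≤ d := by omega
  have hsub : (C₁ ∩ C₂) ∪ (C₂ ∩ C₃) ⊆ C₂ :=
    Finset.union_subset (Finset.inter_subset_right) (Finset.inter_subset_left)
  have hU : ((C₁ ∩ C₂) ∪ (C₂ ∩ C₃)).card ≤ d := hd2 ▸ Finset.card_le_card hsub
  have hkey : ((C₁ ∩ C₂) ∪ (C₂ ∩ C₃)).card + ((C₁ ∩ C₂) ∩ (C₂ ∩ C₃)).card
      = (C₁ ∩ C₂).card + (C₂ ∩ C₃).card := Finset.card_union_add_card_inter _ _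
  have heq : (C₁ ∩ C₂) ∩ (C₂ ∩ C₃) = C₁ ∩ C₂ ∩ C₃ := by
    ext x; simp only [Finset.mem_inter]; tauto
  rw [heq] at hkey
  have hlow : d - 2 ≤ (C₁ ∩ C₂ ∩ C₃).card := by omega
  have hmono : (C₁ ∩ C₂ ∩ C₃).card ≤ (C₁ ∩ C₃).card := by
    apply Finset.card_le_card
    intro x hx
    simp only [Finset.mem_inter] at hx ⊢
    tauto
  omega
end

section
/- Let G be a finite simple graph without 3-cycles and without 5-cycles, let G' be an induced subgraph of G with a perfect matching P, and let w ∈ V(G) \ V(G'). Then the set B = { t ∈ V(G') : there exists t' ∈ N_G(w) with {t,t'} ∈ P } is a stable (independent) set of G. -/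
theorem matched_neighbors_stable_of_no_3_5_cycles
    {V : Type*} [Fintype V] [DecidableEq V] (G : SimpleGraph V)
    (h3 : ∀ a b c : V, G.Adj a b → G.Adj b c → G.Adj c a → False)
    (h5 : ∀ a b c d e : V,
      a ≠ b → a ≠ c → a ≠ d → a ≠ e → b ≠ c → b ≠ d → b ≠ e → c ≠ d → c ≠ e → d ≠ e →
      G.Adj a b → G.Adj b c → G.Adj c d → G.Adj d e → G.Adj e a → False)
    -- G' is the induced subgraph on the vertex set W, with perfect matching
    -- given by the involution f (so {t, f t} ∈ P for each t ∈ W)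
    (W : Finset V) (f : V → V)
    (hmatch : ∀ v ∈ W, f v ∈ W ∧ G.Adj v (f v) ∧ f (f v) = v)
    (w : V) (hw : w ∉ W) :
    -- B = { t ∈ V(G') : ∃ t' ∈ N_G(w), {t, t'} ∈ P } is a stable set of G
    ∀ t₁ ∈ W, ∀ t₂ ∈ W, G.Adj w (f t₁) → G.Adj w (f t₂) → ¬ G.Adj t₁ t₂ := by
  intro t₁ h₁ t₂ h₂ hw1 hw2 hadj
  obtain ⟨hf₁W, hadj₁, hff₁⟩ := hmatch t₁ h₁
  obtain ⟨hf₂W, hadj₂, hff₂⟩ := hmatch t₂ h₂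
  -- degenerate cases
  have hne12 : t₁ ≠ t₂ := hadj.ne
  have hf12 : f t₁ ≠ f t₂ := fun h => hne12 (by rw [← hff₁, h, hff₂])
  have h1f2 : t₁ ≠ f t₂ := by
    intro h
    exact h3 w t₁ (f t₁) (h ▸ hw2) hadj₁ hw1.symm
  have h2f1 : t₂ ≠ f t₁ := by
    intro h
    exact h3 w t₂ (f t₂) (h ▸ hw1) hadj₂ hw2.symm
  have hwW : ∀ x ∈ W, w ≠ x := fun x hx h => hw (h ▸ hx)
  exact h5 w (f t₁) t₁ t₂ (f t₂)
    (hwW _ hf₁W) (hwW _ h₁) (hwW _ h₂) (hwW _ hf₂W)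
    (fun h => hadj₁.ne h.symm) (Ne.symm h2f1) hf12 hne12 h1f2 hadj₂.ne
    hw1 hadj₁.symm hadj hadj₂ hw2.symm
end
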